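/- For ν, μ ∈ {0,1}, positive integers 2N+ν and 2M+μ, and any integer k: the number of partitions of n into parts ≤ 2N+ν with at most 2M+μ parts and BG-rank equal to k has generating function Σ over such partitions of q^n equal to q^{2k²−k} [N+M+μ choose N+k]_{q²} [N+ν+M choose M+k]_{q²}. -/

import Mathlib

def IsDistinctPartition (π : List ℕ) : Prop :=
  π.Chain' (· > ·) ∧ ∀ p ∈ π, 0 < p

def IsPartition (π : List ℕ) : Prop :=
  π.Chain' (· ≥ ·) ∧ ∀ p ∈ π, 0 < p

def oddIdxOdd (π : List ℕ) : ℕ :=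
  ((π.zipIdx.map Prod.swap).filter fun p => p.1 % 2 == 0 && p.2 % 2 == 1).length

def evenIdxOdd (π : List ℕ) : ℕ :=
  ((π.zipIdx.map Prod.swap).filter fun p => p.1 % 2 == 1 && p.2 % 2 == 1).length

def bgRank (π : List ℕ) : ℤ := (oddIdxOdd π : ℤ) - evenIdxOdd π

def altSum : List ℕ → ℤ
  | [] => 0
  | a :: t => (a : ℤ) - altSum t

noncomputable def gaussPoly : ℕ → ℕ → Polynomial ℚ
  | _, 0 => 1
  | 0, _ + 1 => 0
  | m + 1, r + 1 => gaussPoly m r + Polynomial.X ^ (r + 1) * gaussPoly m (r + 1)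

noncomputable def gaussZ (m : ℕ) (r : ℤ) : Polynomial ℚ :=
  if 0 ≤ r then gaussPoly m r.toNat else 0

/-!
Removing the largest part `P + 1` from a partition in a `(P + 1) × (L + 1)` box leaves a
partition in a `(P + 1) × L` box, and since `bgRank (a :: t) = a % 2 - bgRank t` its BG-rank
becomes `(P + 1) % 2 - k`. Hence the generating function `G P L k` satisfies
`G (P + 1) (L + 1) k = G P (L + 1) k + q ^ (P + 1) * G (P + 1) L ((P + 1) % 2 - k)`,
with `G P L k = [k = 0]` when `P = 0` or `L = 0`. The closed form obeys the same recursion: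
after rewriting two of its Gaussian factors with the symmetry `[m, s] = [m, m - s]`, the
recursion is one of the two `q`-Pascal rules applied to the remaining factor, which one
depending on the parity of `P`.
-/

section BGRank

lemma length_filter_zipIdx_succ (l : List ℕ) (n : ℕ) (g : ℕ × ℕ → Bool) :
    (((l.zipIdx (n + 1)).map Prod.swap).filter g).length =
      (((l.zipIdx n).map Prod.swap).filter fun p => g (p.1 + 1, p.2)).length := by
  simp only [← List.countP_eq_length_filter, List.countP_map, List.zipIdx_succ]
  rfl

lemma oddIdxOdd_cons (a : ℕ) (t : List ℕ) : oddIdxOdd (a :: t) = a % 2 + evenIdxOdd t := by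
  have hshift : (fun p : ℕ × ℕ => (p.1 + 1) % 2 == 0 && p.2 % 2 == 1) =
      fun p => p.1 % 2 == 1 && p.2 % 2 == 1 := by
    funext p; congr 1; rw [Bool.eq_iff_iff, beq_iff_eq, beq_iff_eq]; omega
  rw [oddIdxOdd, ← List.countP_eq_length_filter, List.zipIdx_cons, List.map_cons,
    List.countP_cons, List.countP_eq_length_filter, length_filter_zipIdx_succ, hshift, evenIdxOdd]
  split_ifs with h <;> simp at h <;> omega

lemma evenIdxOdd_cons (a : ℕ) (t : List ℕ) : evenIdxOdd (a :: t) = oddIdxOdd t := by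
  have hshift : (fun p : ℕ × ℕ => (p.1 + 1) % 2 == 1 && p.2 % 2 == 1) =
      fun p => p.1 % 2 == 0 && p.2 % 2 == 1 := by
    funext p; congr 1; rw [Bool.eq_iff_iff, beq_iff_eq, beq_iff_eq]; omega
  rw [evenIdxOdd, ← List.countP_eq_length_filter, List.zipIdx_cons, List.map_cons,
    List.countP_cons, List.countP_eq_length_filter, length_filter_zipIdx_succ, hshift, oddIdxOdd]
  simp

lemma bgRank_nil : bgRank [] = 0 := rfl

lemma bgRank_cons (a : ℕ) (t : List ℕ) : bgRank (a :: t) = (a % 2 : ℕ) - bgRank t := by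
  rw [bgRank, bgRank, oddIdxOdd_cons, evenIdxOdd_cons]
  push_cast
  ring

end BGRank

section GaussianBinomial

open Polynomial

lemma gaussPoly_zero_right (m : ℕ) : gaussPoly m 0 = 1 := by
  cases m <;> rfl

lemma gaussPoly_eq_zero_of_lt {m r : ℕ} (h : m < r) : gaussPoly m r = 0 := by
  induction m generalizing r with
  | zero => obtain ⟨r, rfl⟩ := Nat.exists_eq_add_one_of_ne_zero (by omega : r ≠ 0); rfl
  | succ m ih =>
    obtain ⟨r, rfl⟩ := Nat.exists_eq_add_one_of_ne_zero (by omega : r ≠ 0)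
    rw [gaussPoly, ih (by omega), ih (by omega), mul_zero, add_zero]

lemma gaussZ_natCast (m r : ℕ) : gaussZ m r = gaussPoly m r := by
  simp [gaussZ]

lemma gaussZ_eq_zero {m : ℕ} {s : ℤ} (h : s < 0 ∨ (m : ℤ) < s) : gaussZ m s = 0 := by
  rcases h with h | h
  · simp [gaussZ, not_le.2 h]
  · lift s to ℕ using by omega
    rw [gaussZ_natCast, gaussPoly_eq_zero_of_lt (by omega)]

lemma gaussZ_zero_right (m : ℕ) : gaussZ m 0 = 1 := by
  exact_mod_cast (gaussZ_natCast m 0).trans (gaussPoly_zero_right m)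

lemma gaussZ_succ (m : ℕ) (s : ℤ) :
    gaussZ (m + 1) s = gaussZ m (s - 1) + X ^ s.toNat * gaussZ m s := by
  rcases lt_trichotomy s 0 with h | rfl | h
  · simp [gaussZ_eq_zero (.inl h), gaussZ_eq_zero (.inl (show s - 1 < 0 by omega))]
  · simp [gaussZ_zero_right, gaussZ_eq_zero (.inl (show (-1 : ℤ) < 0 by omega))]
  · obtain ⟨r, rfl⟩ : ∃ r : ℕ, s = r + 1 := ⟨(s - 1).toNat, by omega⟩
    have hcast (m' : ℕ) : gaussZ m' ((r : ℤ) + 1) = gaussPoly m' (r + 1) := by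
      exact_mod_cast gaussZ_natCast m' (r + 1)
    rw [hcast, hcast, add_sub_cancel_right, gaussZ_natCast,
      show ((r : ℤ) + 1).toNat = r + 1 by omega]
    rfl

lemma gaussZ_succ' (m : ℕ) (s : ℤ) :
    gaussZ (m + 1) s = gaussZ m s + X ^ ((m : ℤ) + 1 - s).toNat * gaussZ m (s - 1) := by
  induction m generalizing s with
  | zero =>
    rw [gaussZ_succ]
    obtain h | rfl | rfl | h : s < 0 ∨ s = 0 ∨ s = 1 ∨ 1 < s := by omega
    · simp [gaussZ_eq_zero (.inl h), gaussZ_eq_zero (.inl (show s - 1 < 0 by omega))]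
    · simp [gaussZ_zero_right, gaussZ_eq_zero (.inl (show (-1 : ℤ) < 0 by omega))]
    · simp [gaussZ_zero_right, gaussZ_eq_zero (.inr (show ((0 : ℕ) : ℤ) < 1 by omega))]
    · simp [gaussZ_eq_zero (.inr (show ((0 : ℕ) : ℤ) < s by omega)),
        gaussZ_eq_zero (.inr (show ((0 : ℕ) : ℤ) < s - 1 by omega))]
  | succ m ih =>
    have hexp : X ^ s.toNat * X ^ ((m : ℤ) + 1 - s).toNat * gaussZ m (s - 1) =
        X ^ ((m : ℤ) + 2 - s).toNat * X ^ (s - 1).toNat * gaussZ m (s - 1) := by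
      by_cases hs : 1 ≤ s ∧ s ≤ m + 1
      · rw [← pow_add, ← pow_add, show s.toNat + ((m : ℤ) + 1 - s).toNat =
          ((m : ℤ) + 2 - s).toNat + (s - 1).toNat by omega]
      · rw [gaussZ_eq_zero (by omega), mul_zero, mul_zero]
    conv_lhs => rw [gaussZ_succ (m + 1), ih, ih]
    conv_rhs => rw [gaussZ_succ m s, gaussZ_succ m (s - 1)]
    push_cast
    rw [show (m : ℤ) + 1 + 1 - s = m + 2 - s by ring,
      show (m : ℤ) + 1 - (s - 1) = m + 2 - s by ring]
    linear_combination hexp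

lemma gaussZ_symm (m : ℕ) (s : ℤ) : gaussZ m (m - s) = gaussZ m s := by
  induction m generalizing s with
  | zero =>
    rcases eq_or_ne s 0 with rfl | hs
    · simp
    · rw [gaussZ_eq_zero (by omega), gaussZ_eq_zero (by omega)]
  | succ m ih =>
    have ih' := ih (s - 1)
    rw [show (m : ℤ) - (s - 1) = m + 1 - s by ring] at ih'
    rw [gaussZ_succ', gaussZ_succ, ← ih s, ← ih', Nat.cast_add_one,
      show (m : ℤ) + 1 - (m + 1 - s) = s by ring, show (m : ℤ) + 1 - s - 1 = m - s by ring]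

lemma gaussZ_self (m : ℕ) : gaussZ m m = 1 := by
  rw [← gaussZ_symm, sub_self, gaussZ_zero_right]

lemma gaussZ_eq_of_add_eq {m : ℕ} {s s' : ℤ} (h : s + s' = m) : gaussZ m s = gaussZ m s' := by
  rw [← gaussZ_symm, show (m : ℤ) - s = s' by omega]

lemma gaussZ_mul_gaussZ_add_self (m m' : ℕ) (k : ℤ) :
    gaussZ m k * gaussZ m' (m' + k) = if k = 0 then 1 else 0 := by
  rcases lt_trichotomy k 0 with h | rfl | h
  · simp [gaussZ_eq_zero (.inl h), h.ne]
  · simp [gaussZ_zero_right, gaussZ_self]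
  · simp [gaussZ_eq_zero (.inr (show (m' : ℤ) < m' + k by omega)), h.ne']

end GaussianBinomial

section BoxPartitions

lemma isPartition_iff_pairwise {π : List ℕ} :
    IsPartition π ↔ π.Pairwise (· ≥ ·) ∧ ∀ p ∈ π, 0 < p :=
  and_congr_left' List.isChain_iff_pairwise

lemma isPartition_nil : IsPartition [] := by
  simp [isPartition_iff_pairwise]

lemma isPartition_cons {a : ℕ} {t : List ℕ} :
    IsPartition (a :: t) ↔ 0 < a ∧ (∀ p ∈ t, p ≤ a) ∧ IsPartition t := by
  simp only [isPartition_iff_pairwise, List.pairwise_cons, List.forall_mem_cons]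
  tauto

lemma finite_setOf_length_le_forall_le (P L : ℕ) :
    {l : List ℕ | l.length ≤ L ∧ ∀ x ∈ l, x ≤ P}.Finite := by
  refine ((List.finite_length_le (Fin (P + 1)) L).image (List.map Fin.val)).subset ?_
  rintro l ⟨hlen, hle⟩
  refine ⟨l.pmap (fun x hx => ⟨x, Nat.lt_succ_of_le hx⟩) hle, by simpa using hlen, ?_⟩
  simp [List.map_pmap]

noncomputable def boxPartitions (P L : ℕ) (k : ℤ) : Finset (List ℕ) :=
  ((finite_setOf_length_le_forall_le P L).subset fun _ hπ => ⟨hπ.2.2.1, hπ.2.1⟩ :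
    {π | IsPartition π ∧ (∀ p ∈ π, p ≤ P) ∧ π.length ≤ L ∧ bgRank π = k}.Finite).toFinset

lemma mem_boxPartitions {P L : ℕ} {k : ℤ} {π : List ℕ} :
    π ∈ boxPartitions P L k ↔
      IsPartition π ∧ (∀ p ∈ π, p ≤ P) ∧ π.length ≤ L ∧ bgRank π = k := by
  simp [boxPartitions]

lemma boxPartitions_of_eq_zero {P L : ℕ} (h : P = 0 ∨ L = 0) (k : ℤ) :
    boxPartitions P L k = if k = 0 then {[]} else ∅ := by
  ext π
  rw [mem_boxPartitions]
  cases π with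
  | nil => split_ifs with hk <;> simp [isPartition_nil, bgRank_nil, hk, eq_comm]
  | cons a t =>
    suffices ¬ (IsPartition (a :: t) ∧ (∀ p ∈ a :: t, p ≤ P) ∧ (a :: t).length ≤ L ∧
        bgRank (a :: t) = k) by split_ifs <;> simpa
    rintro ⟨hπ, hle, hlen, -⟩
    have ha := (isPartition_cons.1 hπ).1
    have haP := hle a List.mem_cons_self
    rw [List.length_cons] at hlen
    omega

lemma boxPartitions_succ_succ (P L : ℕ) (k : ℤ) :
    boxPartitions (P + 1) (L + 1) k = boxPartitions P (L + 1) k ∪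
      (boxPartitions (P + 1) L (((P + 1) % 2 : ℕ) - k)).map
        ⟨List.cons (P + 1), List.cons_injective⟩ := by
  ext π
  simp only [Finset.mem_union, Finset.mem_map, Function.Embedding.coeFn_mk, mem_boxPartitions]
  cases π with
  | nil => simp [isPartition_nil]
  | cons a t =>
    simp only [isPartition_cons, List.forall_mem_cons, List.length_cons, List.cons.injEq,
      bgRank_cons, exists_eq_right_right]
    constructor
    · rintro ⟨⟨ha, hta, ht⟩, ⟨haP, htP⟩, hlen, hk⟩
      by_cases haP' : a ≤ P
      · exact .inl ⟨⟨ha, hta, ht⟩, ⟨haP', fun p hp => (hta p hp).trans haP'⟩, hlen, hk⟩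
      · obtain rfl : a = P + 1 := by omega
        exact .inr ⟨⟨ht, hta, by omega, by omega⟩, rfl⟩
    · rintro (⟨hπ, ⟨haP, htP⟩, hlen, hk⟩ | ⟨⟨ht, htP, hlen, hk⟩, rfl⟩)
      · exact ⟨hπ, ⟨by omega, fun p hp => (htP p hp).trans (Nat.le_succ P)⟩, hlen, hk⟩
      · exact ⟨⟨by omega, htP, ht⟩, ⟨le_rfl, htP⟩, by omega, by omega⟩

end BoxPartitions

section GeneratingFunction

open PowerSeries

noncomputable def boxGF (P L : ℕ) (k : ℤ) : PowerSeries ℚ :=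
  ∑ π ∈ boxPartitions P L k, X ^ π.sum

lemma boxGF_of_eq_zero {P L : ℕ} (h : P = 0 ∨ L = 0) (k : ℤ) :
    boxGF P L k = if k = 0 then 1 else 0 := by
  rw [boxGF, boxPartitions_of_eq_zero h]
  split_ifs <;> simp

lemma boxGF_succ_succ (P L : ℕ) (k : ℤ) :
    boxGF (P + 1) (L + 1) k =
      boxGF P (L + 1) k + X ^ (P + 1) * boxGF (P + 1) L (((P + 1) % 2 : ℕ) - k) := by
  have hdisj : Disjoint (boxPartitions P (L + 1) k)
      ((boxPartitions (P + 1) L (((P + 1) % 2 : ℕ) - k)).map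
        ⟨List.cons (P + 1), List.cons_injective⟩) := by
    simp only [Finset.disjoint_left, Finset.mem_map, mem_boxPartitions]
    rintro _ ⟨-, hle, -⟩ ⟨t, -, rfl⟩
    simpa using hle (P + 1) List.mem_cons_self
  rw [boxGF, boxPartitions_succ_succ, Finset.sum_union hdisj, Finset.sum_map, boxGF, boxGF,
    Finset.mul_sum]
  simp [pow_add]

lemma mk_card_eq_boxGF (P L : ℕ) (k : ℤ) :
    PowerSeries.mk (fun n => (Nat.card {π : List ℕ // IsPartition π ∧ (∀ p ∈ π, p ≤ P) ∧
      π.length ≤ L ∧ π.sum = n ∧ bgRank π = k} : ℚ)) = boxGF P L k := by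
  ext n
  rw [coeff_mk, boxGF, map_sum]
  simp only [coeff_X_pow, Finset.sum_boole, Nat.cast_inj]
  rw [← Nat.card_eq_finsetCard]
  refine Nat.card_congr (Equiv.subtypeEquivRight fun π => ?_)
  rw [Finset.mem_filter, mem_boxPartitions]
  tauto

end GeneratingFunction

section ClosedForm

open PowerSeries

lemma bgExponent_nonneg (k : ℤ) : 0 ≤ 2 * k ^ 2 - k := by
  rcases le_or_gt k 0 with h | h <;> nlinarith

noncomputable def bgClosedForm (P L : ℕ) (k : ℤ) : PowerSeries ℚ :=
  X ^ (2 * k ^ 2 - k).toNat * Polynomial.aeval (X ^ 2 : PowerSeries ℚ)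
    (gaussZ (P / 2 + (L + 1) / 2) (((P / 2 : ℕ) : ℤ) + k) *
      gaussZ ((P + 1) / 2 + L / 2) (((L / 2 : ℕ) : ℤ) + k))

lemma bgClosedForm_of_eq_zero {P L : ℕ} (h : P = 0 ∨ L = 0) (k : ℤ) :
    bgClosedForm P L k = if k = 0 then 1 else 0 := by
  have hprod : gaussZ (P / 2 + (L + 1) / 2) (((P / 2 : ℕ) : ℤ) + k) *
      gaussZ ((P + 1) / 2 + L / 2) (((L / 2 : ℕ) : ℤ) + k) = if k = 0 then 1 else 0 := by
    rcases h with rfl | rfl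
    · simpa using gaussZ_mul_gaussZ_add_self ((L + 1) / 2) (L / 2) k
    · simpa [mul_comm] using gaussZ_mul_gaussZ_add_self ((P + 1) / 2) (P / 2) k
  rw [bgClosedForm, hprod]
  split_ifs with hk <;> simp [hk]

lemma bgClosedForm_two_mul_add_one_succ (a L : ℕ) (k : ℤ) :
    bgClosedForm (2 * a + 1) (L + 1) k =
      bgClosedForm (2 * a) (L + 1) k + X ^ (2 * a + 1) * bgClosedForm (2 * a + 1) L (1 - k) := by
  obtain ⟨c, d, hc, hd, hL⟩ :
      ∃ c d, (L + 1) / 2 = c ∧ L / 2 = d ∧ (L + 1 + 1) / 2 = d + 1 := ⟨_, _, rfl, rfl, by omega⟩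
  simp only [bgClosedForm, hc, hd, hL, Nat.mul_div_cancel_left a two_pos,
    show (2 * a + 1) / 2 = a by omega, show (2 * a + 1 + 1) / 2 = a + 1 by omega]
  have hsymm₁ : gaussZ (a + c) (a + (1 - k)) = gaussZ (a + c) (c + k - 1) :=
    gaussZ_eq_of_add_eq (by push_cast; ring)
  have hsymm₂ : gaussZ (a + 1 + d) (d + (1 - k)) = gaussZ (a + 1 + d) (a + k) :=
    gaussZ_eq_of_add_eq (by push_cast; ring)
  rw [hsymm₁, hsymm₂, show a + 1 + d = a + (d + 1) by ring, show a + 1 + c = a + c + 1 by ring,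
    gaussZ_succ']
  have hexp : X ^ (2 * k ^ 2 - k).toNat * (X ^ 2) ^ (((a + c : ℕ) : ℤ) + 1 - (c + k)).toNat *
        Polynomial.aeval (X ^ 2 : PowerSeries ℚ) (gaussZ (a + c) (c + k - 1)) =
      X ^ (2 * a + 1) * X ^ (2 * (1 - k) ^ 2 - (1 - k)).toNat *
        Polynomial.aeval (X ^ 2 : PowerSeries ℚ) (gaussZ (a + c) (c + k - 1)) := by
    -- for `k > a + 1` the truncation in `toNat` is harmless: the coefficient vanishes
    by_cases hk : k ≤ a + 1
    · rw [← pow_mul, ← pow_add, ← pow_add]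
      have := bgExponent_nonneg k
      have := bgExponent_nonneg (1 - k)
      have : (1 - k) ^ 2 = k ^ 2 - 2 * k + 1 := by ring
      congr 2
      push_cast
      omega
    · rw [gaussZ_eq_zero (.inr (by push_cast; omega)), map_zero, mul_zero, mul_zero]
  simp only [map_mul, map_add, map_pow, Polynomial.aeval_X]
  linear_combination
    Polynomial.aeval (X ^ 2 : PowerSeries ℚ) (gaussZ (a + (d + 1)) (a + k)) * hexp

lemma bgClosedForm_two_mul_add_two_succ (a L : ℕ) (k : ℤ) :
    bgClosedForm (2 * a + 2) (L + 1) k =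
      bgClosedForm (2 * a + 1) (L + 1) k + X ^ (2 * a + 2) * bgClosedForm (2 * a + 2) L (-k) := by
  obtain ⟨c, d, hc, hd, hL⟩ :
      ∃ c d, (L + 1) / 2 = c ∧ L / 2 = d ∧ (L + 1 + 1) / 2 = d + 1 := ⟨_, _, rfl, rfl, by omega⟩
  simp only [bgClosedForm, hc, hd, hL, show (2 * a + 1) / 2 = a by omega,
    show (2 * a + 2) / 2 = a + 1 by omega,
    show (2 * a + 2 + 1) / 2 = a + 1 by omega]
  have hsymm₁ : gaussZ (a + 1 + c) ((a + 1 : ℕ) + -k) = gaussZ (a + 1 + c) (c + k) :=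
    gaussZ_eq_of_add_eq (by push_cast; ring)
  have hsymm₂ : gaussZ (a + 1 + d) (d + -k) = gaussZ (a + 1 + d) ((a + 1 : ℕ) + k) :=
    gaussZ_eq_of_add_eq (by push_cast; ring)
  rw [hsymm₁, hsymm₂, show a + 1 + d = a + (d + 1) by ring,
    show a + 1 + (d + 1) = a + (d + 1) + 1 by ring, gaussZ_succ,
    show ((a + 1 : ℕ) : ℤ) + k - 1 = a + k by push_cast; ring]
  have hexp : X ^ (2 * k ^ 2 - k).toNat * (X ^ 2) ^ (((a + 1 : ℕ) : ℤ) + k).toNat *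
        Polynomial.aeval (X ^ 2 : PowerSeries ℚ) (gaussZ (a + (d + 1)) ((a + 1 : ℕ) + k)) =
      X ^ (2 * a + 2) * X ^ (2 * (-k) ^ 2 - -k).toNat *
        Polynomial.aeval (X ^ 2 : PowerSeries ℚ) (gaussZ (a + (d + 1)) ((a + 1 : ℕ) + k)) := by
    by_cases hk : 0 ≤ ((a + 1 : ℕ) : ℤ) + k
    · rw [← pow_mul, ← pow_add, ← pow_add]
      have := bgExponent_nonneg k
      have := bgExponent_nonneg (-k)
      rw [neg_sq] at this ⊢
      congr 2
      push_cast at hk ⊢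
      omega
    · rw [gaussZ_eq_zero (.inl (by omega)), map_zero, mul_zero, mul_zero]
  simp only [map_mul, map_add, map_pow, Polynomial.aeval_X]
  linear_combination
    Polynomial.aeval (X ^ 2 : PowerSeries ℚ) (gaussZ (a + 1 + c) (c + k)) * hexp

lemma bgClosedForm_succ_succ (P L : ℕ) (k : ℤ) :
    bgClosedForm (P + 1) (L + 1) k =
      bgClosedForm P (L + 1) k +
        X ^ (P + 1) * bgClosedForm (P + 1) L (((P + 1) % 2 : ℕ) - k) := by
  obtain ⟨a, rfl | rfl⟩ := Nat.even_or_odd' P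
  · rw [bgClosedForm_two_mul_add_one_succ, show (2 * a + 1) % 2 = 1 by omega, Nat.cast_one]
  · rw [show 2 * a + 1 + 1 = 2 * a + 2 by ring, bgClosedForm_two_mul_add_two_succ,
      show (2 * a + 2) % 2 = 0 by omega, Nat.cast_zero, zero_sub]

end ClosedForm

theorem boxGF_eq_bgClosedForm (P L : ℕ) (k : ℤ) : boxGF P L k = bgClosedForm P L k := by
  induction P generalizing L k with
  | zero => rw [boxGF_of_eq_zero (.inl rfl), bgClosedForm_of_eq_zero (.inl rfl)]
  | succ P ihP =>
    induction L generalizing k with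
    | zero => rw [boxGF_of_eq_zero (.inr rfl), bgClosedForm_of_eq_zero (.inr rfl)]
    | succ L ihL => rw [boxGF_succ_succ, bgClosedForm_succ_succ, ihP, ihL]

theorem stmt18_general (N M ν μ : ℕ) (hν : ν ≤ 1) (hμ : μ ≤ 1) (k : ℤ) :
    PowerSeries.mk (fun n =>
      (Nat.card {π : List ℕ // IsPartition π ∧ (∀ p ∈ π, p ≤ 2 * N + ν) ∧
        π.length ≤ 2 * M + μ ∧ π.sum = n ∧ bgRank π = k} : ℚ)) =
    PowerSeries.X ^ (2 * k ^ 2 - k).toNat *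
      Polynomial.aeval (PowerSeries.X ^ 2 : PowerSeries ℚ)
        (gaussZ (N + M + μ) ((N : ℤ) + k) * gaussZ (N + ν + M) ((M : ℤ) + k)) := by
  rw [mk_card_eq_boxGF, boxGF_eq_bgClosedForm, bgClosedForm,
    show (2 * N + ν) / 2 = N by omega, show (2 * N + ν + 1) / 2 = N + ν by omega,
    show (2 * M + μ) / 2 = M by omega, show (2 * M + μ + 1) / 2 = M + μ by omega, ← add_assoc]

theorem stmt18 (N M ν μ : ℕ) (hν : ν ≤ 1) (hμ : μ ≤ 1)
    (hN : 0 < 2 * N + ν) (hM : 0 < 2 * M + μ) (k : ℤ) :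
    PowerSeries.mk (fun n =>
      (Nat.card {π : List ℕ // IsPartition π ∧ (∀ p ∈ π, p ≤ 2 * N + ν) ∧
        π.length ≤ 2 * M + μ ∧ π.sum = n ∧ bgRank π = k} : ℚ)) =
    PowerSeries.X ^ (2 * k ^ 2 - k).toNat *
      Polynomial.aeval (PowerSeries.X ^ 2 : PowerSeries ℚ)
        (gaussZ (N + M + μ) ((N : ℤ) + k) * gaussZ (N + ν + M) ((M : ℤ) + k)) :=
  stmt18_general N M ν μ hν hμ k
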